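/- arXiv:math/0406195 — 7 statements merged into one kernel-verified Lean document; each statement's English description precedes it below -/
import Mathlib

section
/- Let (R, m_R) and (S, m_S) be local rings and let φ : R → S be a local ring homomorphism such that (i) S is flat as an R-module, and (ii) m_R·S = m_S (the extension of the maximal ideal of R is the maximal ideal of S). Then for every ideal I of R, the length of S/IS as an S-module equals the length of R/I as an R-module. -/
/-!
By flatness, `S ⊗[R] -` carries a composition series of `R ⧸ I` to a filtration of
`S ⊗[R] (R ⧸ I) ≅ S ⧸ IS` whose factors are `S ⊗[R] (R ⧸ m_R) ≅ S ⧸ m_R S`. The hypothesis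
`m_R S = m_S` makes each factor the residue field of `S`, of length one. Infinite length is
preserved because a flat local homomorphism is faithfully flat.
-/

/-- The length of a module, valued in `ℕ∞`: the height of `⊤` in the lattice of
submodules, i.e. the supremum of lengths of strictly increasing chains of submodules. -/
noncomputable def moduleLength (R M : Type*) [Ring R] [AddCommGroup M] [Module R M] : ℕ∞ :=
  Order.height (⊤ : Submodule R M)

theorem moduleLength_eq_length (R M : Type*) [Ring R] [AddCommGroup M] [Module R M] :
    moduleLength R M = Module.length R M :=
  (Module.length_eq_height R M).symm

open IsLocalRing TensorProduct in
theorem IsLocalRing.length_baseChange_of_map_maximalIdeal_eq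
    (R S M : Type*) [CommRing R] [CommRing S] [IsLocalRing R] [IsLocalRing S]
    [Algebra R S] [IsLocalHom (algebraMap R S)] [Module.Flat R S]
    [AddCommGroup M] [Module R M]
    (hm : (maximalIdeal R).map (algebraMap R S) = maximalIdeal S) :
    Module.length S (S ⊗[R] M) = Module.length R M := by
  have hκ : Module.length S (S ⧸ maximalIdeal S) = 1 :=
    Module.length_eq_one_iff.mpr (isSimpleModule_iff_isCoatom.mpr (maximalIdeal.isMaximal S).out)
  rw [IsLocalRing.length_baseChange, hm, hκ, mul_one]

/-- If `φ : R → S` is a local homomorphism of local rings such that `S` is flat over `R`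
and `m_R · S = m_S`, then for every ideal `I` of `R` the length of `S/IS` as an `S`-module
equals the length of `R/I` as an `R`-module.  (This is the algebraic content of the fact
that algebraic multiplicity is preserved by étale morphisms.) -/
theorem length_quotient_eq_of_flat_of_maximalIdeal_map_eq
    (R S : Type*) [CommRing R] [CommRing S] [IsLocalRing R] [IsLocalRing S]
    [Algebra R S] [IsLocalHom (algebraMap R S)] [Module.Flat R S]
    (hm : (IsLocalRing.maximalIdeal R).map (algebraMap R S) = IsLocalRing.maximalIdeal S) :
    ∀ I : Ideal R,
      moduleLength S (S ⧸ I.map (algebraMap R S)) = moduleLength R (R ⧸ I) := by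
  intro I
  rw [moduleLength_eq_length, moduleLength_eq_length,
    (Algebra.TensorProduct.quotIdealMapEquivTensorQuot S I).toLinearEquiv.length_eq,
    IsLocalRing.length_baseChange_of_map_maximalIdeal_eq R S (R ⧸ I) hm]
end

section
/- Let L be a field and let F ∈ L[x₁,…,xₙ] be a polynomial that is regular in xₙ, i.e., F(0,…,0,xₙ) is a nonzero polynomial in xₙ. Suppose F = U·G in the formal power series ring L[[x₁,…,xₙ]], where U is a unit of L[[x₁,…,xₙ]] and G = xₙ^m + a₁·xₙ^{m−1} + ⋯ + a_m is a Weierstrass polynomial in xₙ, i.e., each aᵢ ∈ L[[x₁,…,x_{n−1}]] has zero constant coefficient. Then each coefficient aᵢ is algebraic over the polynomial ring L[x₁,…,x_{n−1}], and U is algebraic over L[x₁,…,xₙ]. -/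
open MvPolynomial MvPowerSeries

/-- The embedding of the polynomial ring `L[x₁,…,xₙ]` into the formal power series ring
`L[[x₁,…,x_{n+1}]]` (the last variable is not used). -/
noncomputable def polyToBigPS (L : Type) [Field L] (n : ℕ) :
    MvPolynomial (Fin n) L →+* MvPowerSeries (Fin (n + 1)) L :=
  MvPolynomial.coeToMvPowerSeries.ringHom.comp
    (MvPolynomial.rename (Fin.castSucc : Fin n → Fin (n + 1))).toRingHom

/-!
Write `A = L[x₁,…,xₙ]` and `B = L[[x₁,…,xₙ]]`. Splitting off the last variable identifies
`L[[x₁,…,x_{n+1}]]` with `B[[X]]`; there `F` becomes a nonzero polynomial in `A[X]` and `G`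
the distinguished polynomial `X^m + a₁X^{m-1} + ⋯ + a_m ∈ B[X]`. As `B` is a Noetherian
local ring, Krull's intersection theorem makes it Hausdorff for its maximal ideal, so
Weierstrass division by `G` is unique and `F = U·G` forces `G ∣ F` in `B[X]`. Every root of
`G` in an algebraic closure of `Frac B` is then a root of `F`, hence algebraic over `A`, and
so are the coefficients `aᵢ` of `G`. Finally `U·G = F`, where `F ≠ 0` and `G` are algebraic
over `L[x₁,…,x_{n+1}]`.
-/

open Polynomial in
theorem isAlgebraic_coeff_of_monic_dvd_map {A B : Type*} [CommRing A] [IsDomain A]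
    [CommRing B] [IsDomain B] [Algebra A B] {f : A[X]} (hf : f ≠ 0) {g : B[X]} (hg : g.Monic)
    (hdvd : g ∣ f.map (algebraMap A B)) (k : ℕ) : IsAlgebraic A (g.coeff k) := by
  let Ω := AlgebraicClosure (FractionRing B)
  have hinj : Function.Injective (algebraMap B Ω) := by
    rw [IsScalarTower.algebraMap_eq B (FractionRing B) Ω]
    exact (algebraMap (FractionRing B) Ω).injective.comp (IsFractionRing.injective B _)
  have hroots : ∀ r ∈ (g.map (algebraMap B Ω)).roots,
      r ∈ (algebraMap (Subalgebra.algebraicClosure A Ω) Ω).range := by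
    intro r hr
    refine ⟨⟨r, f, hf, ?_⟩, rfl⟩
    have hdvd' : g.map (algebraMap B Ω) ∣ f.map (algebraMap A Ω) := by
      rw [IsScalarTower.algebraMap_eq A B Ω, ← Polynomial.map_map]
      exact Polynomial.map_dvd _ hdvd
    rw [Polynomial.aeval_def, Polynomial.eval₂_eq_eval_map]
    exact eval_eq_zero_of_dvd_of_eval_eq_zero hdvd' (isRoot_of_mem_roots hr)
  obtain ⟨⟨c, hc⟩, hck⟩ := (lifts_iff_coeff_lifts _).mp
    ((IsAlgClosed.splits _).mem_lift_of_roots_mem_range (hg.map _) _ hroots) k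
  rw [Polynomial.coeff_map] at hck
  exact (isAlgebraic_algebraMap_iff hinj).mp (hck ▸ hc)

theorem isAlgebraic_pow_add_sum_mul_pow {R S : Type*} [CommRing R] [IsDomain R] [CommRing S]
    [Algebra R S] {x : S} (hx : IsAlgebraic R x) {m : ℕ} {a : Fin m → S}
    (ha : ∀ i, IsAlgebraic R (a i)) : IsAlgebraic R (x ^ m + ∑ i, a i * x ^ (m - 1 - (i : ℕ))) :=
  show _ ∈ Subalgebra.algebraicClosure R S from
    add_mem (pow_mem hx _) (sum_mem fun i _ ↦ mul_mem (ha i) (pow_mem hx _))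

theorem isAlgebraic_of_mul_eq {R S : Type*} [CommRing R] [NoZeroDivisors R] [CommRing S]
    [NoZeroDivisors S] [Algebra R S] {u g f : S} (h : u * g = f) (hf0 : f ≠ 0)
    (hf : IsAlgebraic R f) (hg : IsAlgebraic R g) : IsAlgebraic R u :=
  hg.of_mul (mem_nonZeroDivisors_of_ne_zero (right_ne_zero_of_mul (h ▸ hf0)))
    (by rwa [mul_comm, h])

namespace Polynomial

theorem IsDistinguishedAt.dvd_of_coe_dvd_coe {A : Type*} [CommRing A] {I : Ideal A}
    [IsHausdorff I A] {g f : A[X]} (hg : g.IsDistinguishedAt I)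
    (hdvd : (g : PowerSeries A) ∣ (f : PowerSeries A)) : g ∣ f := by
  rcases subsingleton_or_nontrivial A with _ | _
  · exact dvd_of_eq (Subsingleton.elim _ _)
  have hI : (1 : A) ∉ I := fun h ↦ by
    rw [← Ideal.eq_top_iff_one] at h
    subst h
    exact not_subsingleton A ‹IsHausdorff ⊤ A›.subsingleton
  obtain ⟨q, hq⟩ := hdvd
  have hrem : (g : PowerSeries A) * (q - (f /ₘ g : A[X])) = (f %ₘ g : A[X]) := by
    rw [modByMonic_eq_sub_mul_div f g, mul_sub, ← hq]
    push_cast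
    ring
  have horder : (g.natDegree : ℕ∞) = ((g : PowerSeries A).map (Ideal.Quotient.mk I)).order :=
    hg.coe_natDegree_eq_order_map _ 1 (by rw [map_one]; exact hI) (mul_one _).symm
  have hdeg : (f %ₘ g).degree < ((g : PowerSeries A).map (Ideal.Quotient.mk I)).order.toNat := by
    rw [← horder, ENat.toNat_natCast]
    exact (degree_modByMonic_lt f hg.monic).trans_le degree_le_natDegree
  exact (modByMonic_eq_zero_iff_dvd hg.monic).mp
    (hg.isWeierstrassDivisorAt'.eq_zero_of_mul_eq hdeg hrem).2

section weierstrassPolynomial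

variable {R : Type*} [Semiring R] {m : ℕ}

noncomputable def weierstrassPolynomial (m : ℕ) (b : Fin m → R) : R[X] :=
  X ^ m + ∑ i : Fin m, C (b i) * X ^ (m - 1 - i)

theorem coeff_weierstrassPolynomial (b : Fin m → R) {k : ℕ} (hk : k ≠ m) :
    (weierstrassPolynomial m b).coeff k = ∑ i : Fin m, if k = m - 1 - i then b i else 0 := by
  simp [weierstrassPolynomial, coeff_X_pow, hk]

theorem coeff_weierstrassPolynomial_sub_one_sub (b : Fin m → R) (i : Fin m) :
    (weierstrassPolynomial m b).coeff (m - 1 - i) = b i := by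
  rw [coeff_weierstrassPolynomial b (by omega),
    Finset.sum_eq_single i (fun j _ hji ↦ if_neg (by omega)) (by simp), if_pos rfl]

theorem isDistinguishedAt_weierstrassPolynomial {R : Type*} [CommRing R] {I : Ideal R}
    (b : Fin m → R) (hb : ∀ i, b i ∈ I) : (weierstrassPolynomial m b).IsDistinguishedAt I := by
  have htail : (∑ i : Fin m, C (b i) * X ^ (m - 1 - i)).degree < (m : WithBot ℕ) := by
    rw [degree_lt_iff_coeff_zero]
    intro k hk
    simp only [finsetSum_coeff, coeff_C_mul_X_pow]
    exact Finset.sum_eq_zero fun i _ ↦ if_neg (by omega)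
  refine ⟨⟨fun {k} hk ↦ ?_⟩, monic_X_pow_add htail⟩
  have hkm : k ≠ m := (hk.trans_le (natDegree_add_le_of_degree_le (natDegree_X_pow_le m)
    (natDegree_le_of_degree_le htail.le))).ne
  rw [coeff_weierstrassPolynomial b hkm]
  exact Ideal.sum_mem _ fun i _ ↦ by split_ifs <;> simp [hb, I.zero_mem]

theorem isAlgebraic_of_map_eq_mul_weierstrassPolynomial {A R : Type*} [CommRing A] [IsDomain A]
    [CommRing R] [IsDomain R] [Algebra A R] {I : Ideal R} [IsHausdorff I R] {b : Fin m → R}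
    (hb : ∀ i, b i ∈ I) {f : A[X]} (hf : f ≠ 0) {W : PowerSeries R}
    (hfW : (f.map (algebraMap A R) : PowerSeries R) = W * weierstrassPolynomial m b) (i : Fin m) :
    IsAlgebraic A (b i) := by
  have hG := isDistinguishedAt_weierstrassPolynomial b hb
  have hdvd := hG.dvd_of_coe_dvd_coe (Dvd.intro_left W hfW.symm)
  simpa [coeff_weierstrassPolynomial_sub_one_sub] using
    isAlgebraic_coeff_of_monic_dvd_map hf hG.monic hdvd (m - 1 - i)

end weierstrassPolynomial

end Polynomial

noncomputable def MvPolynomial.finSuccEquivLast (R : Type*) [CommSemiring R] (n : ℕ) :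
    MvPolynomial (Fin (n + 1)) R ≃ₐ[R] Polynomial (MvPolynomial (Fin n) R) :=
  (renameEquiv R (finSuccEquiv' (Fin.last n))).trans (optionEquivLeft R (Fin n))

namespace MvPowerSeries

@[simp]
theorem algebraMap_mvPolynomial {σ R : Type*} [CommSemiring R] (p : MvPolynomial σ R) :
    algebraMap (MvPolynomial σ R) (MvPowerSeries σ R) p = p := by
  simp [algebraMap_apply']

theorem isAlgebraic_coe {σ R : Type*} [CommRing R] [Nontrivial R] (p : MvPolynomial σ R) :
    IsAlgebraic (MvPolynomial σ R) (p : MvPowerSeries σ R) := by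
  simpa using isAlgebraic_algebraMap (A := MvPowerSeries σ R) p

variable {R : Type*} [CommSemiring R] {n : ℕ}

theorem coeff_rename_equiv {σ τ : Type*} (e : σ ≃ τ) (p : MvPowerSeries σ R) (y : τ →₀ ℕ) :
    coeff y (rename e p) = coeff (y.equivMapDomain e.symm) p := by
  have : y = Finsupp.embDomain e.toEmbedding (y.equivMapDomain e.symm) := by
    rw [Finsupp.embDomain_eq_mapDomain, Equiv.coe_toEmbedding,
      ← Finsupp.equivMapDomain_eq_mapDomain, ← Finsupp.equivMapDomain_trans,
      Equiv.symm_trans_self, Finsupp.equivMapDomain_refl]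
  conv_lhs => rw [this]
  exact coeff_embDomain_rename _ _ _

variable (R n) in
noncomputable def finSuccEquivLast :
    MvPowerSeries (Fin (n + 1)) R ≃ₐ[R] PowerSeries (MvPowerSeries (Fin n) R) :=
  (renameEquiv R (finSuccEquiv' (Fin.last n))).trans (optionEquivLeft (Fin n) R)

theorem coeff_coeff_finSuccEquivLast (p : MvPowerSeries (Fin (n + 1)) R) (k : ℕ)
    (x : Fin n →₀ ℕ) :
    coeff x (PowerSeries.coeff k (finSuccEquivLast R n p)) =
      coeff ((x.optionElim k).equivMapDomain (finSuccEquiv' (Fin.last n)).symm) p := by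
  simp only [finSuccEquivLast, AlgEquiv.trans_apply, coeff_coeff_optionEquivLeft]
  exact coeff_rename_equiv _ _ _

@[simp]
theorem finSuccEquivLast_X_last :
    finSuccEquivLast R n (X (Fin.last n)) = PowerSeries.X := by
  simp [finSuccEquivLast, renameEquiv]

@[simp]
theorem finSuccEquivLast_X_castSucc (i : Fin n) :
    finSuccEquivLast R n (X i.castSucc) = PowerSeries.C (X i) := by
  simp [finSuccEquivLast, renameEquiv, finSuccEquiv'_last_apply_castSucc]

@[simp]
theorem finSuccEquivLast_C (r : R) :
    finSuccEquivLast R n (C r) = PowerSeries.C (C r) := by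
  simp [finSuccEquivLast, renameEquiv]

theorem exists_finSuccEquivLast_eq_C {p : MvPowerSeries (Fin (n + 1)) R}
    (hp : ∀ d : Fin (n + 1) →₀ ℕ, d (Fin.last n) ≠ 0 → coeff d p = 0) :
    ∃ c, finSuccEquivLast R n p = PowerSeries.C c ∧ constantCoeff c = constantCoeff p := by
  refine ⟨PowerSeries.constantCoeff (finSuccEquivLast R n p), ?_, by
    simpa using coeff_coeff_finSuccEquivLast p 0 0⟩
  ext k x
  rcases k with _ | k
  · simp
  rw [coeff_coeff_finSuccEquivLast, hp, PowerSeries.coeff_C, if_neg k.succ_ne_zero, map_zero]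
  simp

theorem finSuccEquivLast_coe (p : MvPolynomial (Fin (n + 1)) R) :
    finSuccEquivLast R n p = ((MvPolynomial.finSuccEquivLast R n p).map
      (algebraMap (MvPolynomial (Fin n) R) (MvPowerSeries (Fin n) R)) : PowerSeries _) := by
  induction p using MvPolynomial.induction_on with
  | C r => simp [MvPolynomial.finSuccEquivLast]
  | add p q hp hq => simp [hp, hq]
  | mul_X p i hp =>
    induction i using Fin.lastCases with
    | last => simp [hp, MvPolynomial.finSuccEquivLast]
    | cast i => simp [hp, MvPolynomial.finSuccEquivLast, finSuccEquiv'_last_apply_castSucc]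

theorem finSuccEquivLast_pow_add_sum_mul_pow {m : ℕ}
    {a : Fin m → MvPowerSeries (Fin (n + 1)) R} {b : Fin m → MvPowerSeries (Fin n) R}
    (hab : ∀ i, finSuccEquivLast R n (a i) = PowerSeries.C (b i)) :
    finSuccEquivLast R n (X (Fin.last n) ^ m + ∑ i, a i * X (Fin.last n) ^ (m - 1 - (i : ℕ))) =
      (Polynomial.weierstrassPolynomial m b : PowerSeries _) := by
  rw [Polynomial.weierstrassPolynomial, ← Polynomial.coeToPowerSeries.ringHom_apply]
  simp only [map_add, map_pow, map_sum, map_mul, finSuccEquivLast_X_last, hab,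
    Polynomial.coeToPowerSeries.ringHom_apply, Polynomial.coe_X, Polynomial.coe_C]

theorem isAlgebraic_of_coe_eq_mul_weierstrassPolynomial {L : Type*} [Field L] {m : ℕ}
    {F : MvPolynomial (Fin (n + 1)) L} (hF : F ≠ 0) {U : MvPowerSeries (Fin (n + 1)) L}
    {b : Fin m → MvPowerSeries (Fin n) L} (hb : ∀ i, constantCoeff (b i) = 0)
    (hFUG : finSuccEquivLast L n F =
      finSuccEquivLast L n U * Polynomial.weierstrassPolynomial m b) (i : Fin m) :
    IsAlgebraic (MvPolynomial (Fin n) L) (b i) := by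
  have : IsDomain (MvPowerSeries (Fin n) L) := NoZeroDivisors.to_isDomain _
  refine Polynomial.isAlgebraic_of_map_eq_mul_weierstrassPolynomial
    (I := IsLocalRing.maximalIdeal _) (fun i ↦ ?_) (f := MvPolynomial.finSuccEquivLast L n F)
    (by simpa using hF) (by rw [← finSuccEquivLast_coe, hFUG]) i
  rw [IsLocalRing.mem_maximalIdeal, mem_nonunits_iff, isUnit_iff_constantCoeff, hb]
  exact not_isUnit_zero

end MvPowerSeries

open Polynomial in
theorem eval₂_polyToBigPS_eq_zero {L : Type} [Field L] {n : ℕ}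
    {x : MvPowerSeries (Fin (n + 1)) L} {y : MvPowerSeries (Fin n) L}
    (hxy : MvPowerSeries.finSuccEquivLast L n x = PowerSeries.C y)
    {P : (MvPolynomial (Fin n) L)[X]} (hP : aeval y P = 0) : P.eval₂ (polyToBigPS L n) x = 0 := by
  let ψ : MvPowerSeries (Fin (n + 1)) L →+* PowerSeries (MvPowerSeries (Fin n) L) :=
    MvPowerSeries.finSuccEquivLast L n
  have hcomp : ψ.comp (polyToBigPS L n) =
      PowerSeries.C.comp (algebraMap (MvPolynomial (Fin n) L) (MvPowerSeries (Fin n) L)) := by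
    apply MvPolynomial.ringHom_ext <;> simp [ψ, polyToBigPS]
  apply (MvPowerSeries.finSuccEquivLast L n).injective
  calc ψ (P.eval₂ (polyToBigPS L n) x)
      = P.eval₂ (PowerSeries.C.comp (algebraMap _ _)) (PowerSeries.C y) := by
        rw [← hcomp, ← hxy, Polynomial.hom_eval₂]; rfl
    _ = PowerSeries.C (aeval y P) := by rw [Polynomial.aeval_def, Polynomial.hom_eval₂]
    _ = _ := by rw [hP, map_zero, map_zero]

open Polynomial in
theorem isAlgebraic_of_eval₂_polyToBigPS_eq_zero {L : Type} [Field L] {n : ℕ}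
    {x : MvPowerSeries (Fin (n + 1)) L} {P : (MvPolynomial (Fin n) L)[X]} (hP : P ≠ 0)
    (hx : P.eval₂ (polyToBigPS L n) x = 0) : IsAlgebraic (MvPolynomial (Fin (n + 1)) L) x := by
  refine ⟨P.map (MvPolynomial.rename Fin.castSucc).toRingHom,
    (Polynomial.map_ne_zero_iff
      (MvPolynomial.rename_injective _ (Fin.castSucc_injective n))).mpr hP, ?_⟩
  have hcomp : (algebraMap (MvPolynomial (Fin (n + 1)) L) (MvPowerSeries (Fin (n + 1)) L)).comp
      (MvPolynomial.rename Fin.castSucc).toRingHom = polyToBigPS L n := by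
    apply MvPolynomial.ringHom_ext <;> simp [polyToBigPS]
  rwa [Polynomial.aeval_def, Polynomial.eval₂_map, hcomp]

theorem weierstrass_data_algebraic_general (L : Type) [Field L] (n : ℕ)
    (F : MvPolynomial (Fin (n + 1)) L)
    (hreg : (aeval (fun i : Fin (n + 1) =>
      if i = Fin.last n then (Polynomial.X : Polynomial L) else 0) F) ≠ 0)
    (m : ℕ) (U : MvPowerSeries (Fin (n + 1)) L)
    (a : Fin m → MvPowerSeries (Fin (n + 1)) L)
    (ha : ∀ i, ∀ d : Fin (n + 1) →₀ ℕ, d (Fin.last n) ≠ 0 →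
      MvPowerSeries.coeff d (a i) = 0)
    (ha0 : ∀ i, MvPowerSeries.constantCoeff (a i) = 0)
    (hFUG : (F : MvPowerSeries (Fin (n + 1)) L) =
      U * ((MvPowerSeries.X (Fin.last n)) ^ m +
        ∑ i : Fin m, a i * (MvPowerSeries.X (Fin.last n)) ^ (m - 1 - (i : ℕ)))) :
    (∀ i, ∃ P : Polynomial (MvPolynomial (Fin n) L),
        P ≠ 0 ∧ Polynomial.eval₂ (polyToBigPS L n) (a i) P = 0) ∧
    (∃ P : Polynomial (MvPolynomial (Fin (n + 1)) L), P ≠ 0 ∧ Polynomial.aeval U P = 0) := by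
  have hF : F ≠ 0 := by
    rintro rfl
    exact hreg (map_zero _)
  choose b hab hb0 using fun i ↦ exists_finSuccEquivLast_eq_C (ha i)
  have hb := isAlgebraic_of_coe_eq_mul_weierstrassPolynomial hF (U := U)
    (fun i ↦ (hb0 i).trans (ha0 i))
    (by rw [hFUG, map_mul, finSuccEquivLast_pow_add_sum_mul_pow hab])
  have ha' : ∀ i, ∃ P : Polynomial (MvPolynomial (Fin n) L),
      P ≠ 0 ∧ Polynomial.eval₂ (polyToBigPS L n) (a i) P = 0 := fun i ↦
    (hb i).elim fun P hP ↦ ⟨P, hP.1, eval₂_polyToBigPS_eq_zero (hab i) hP.2⟩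
  have hX : IsAlgebraic (MvPolynomial (Fin (n + 1)) L)
      (MvPowerSeries.X (Fin.last n) : MvPowerSeries (Fin (n + 1)) L) := by
    simpa using isAlgebraic_coe (MvPolynomial.X (Fin.last n) : MvPolynomial _ L)
  have hG := isAlgebraic_pow_add_sum_mul_pow hX fun i ↦
    (ha' i).elim fun _ hP ↦ isAlgebraic_of_eval₂_polyToBigPS_eq_zero hP.1 hP.2
  exact ⟨ha', isAlgebraic_of_mul_eq hFUG.symm (MvPolynomial.coe_eq_zero_iff.not.mpr hF)
    (isAlgebraic_coe F) hG⟩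

/-- Lemma 3.2 (definability of Weierstrass data): let `F ∈ L[x₁,…,x_{n+1}]` be regular in
the last variable, and suppose `F = U·G` in `L[[x₁,…,x_{n+1}]]` with `U` a unit and
`G = xₙ₊₁^m + a₁·xₙ₊₁^{m-1} + ⋯ + a_m` a Weierstrass polynomial whose coefficients `aᵢ`
are power series in the first `n` variables with zero constant coefficient.  Then each
`aᵢ` is algebraic over `L[x₁,…,xₙ]` and `U` is algebraic over `L[x₁,…,x_{n+1}]`. -/
theorem weierstrass_data_algebraic (L : Type) [Field L] (n : ℕ)
    (F : MvPolynomial (Fin (n + 1)) L)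
    (hreg : (aeval (fun i : Fin (n + 1) =>
      if i = Fin.last n then (Polynomial.X : Polynomial L) else 0) F) ≠ 0)
    (m : ℕ) (U : MvPowerSeries (Fin (n + 1)) L) (hU : IsUnit U)
    (a : Fin m → MvPowerSeries (Fin (n + 1)) L)
    (ha : ∀ i, ∀ d : Fin (n + 1) →₀ ℕ, d (Fin.last n) ≠ 0 →
      MvPowerSeries.coeff d (a i) = 0)
    (ha0 : ∀ i, MvPowerSeries.constantCoeff (a i) = 0)
    (hFUG : (F : MvPowerSeries (Fin (n + 1)) L) =
      U * ((MvPowerSeries.X (Fin.last n)) ^ m +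
        ∑ i : Fin m, a i * (MvPowerSeries.X (Fin.last n)) ^ (m - 1 - (i : ℕ)))) :
    (∀ i, ∃ P : Polynomial (MvPolynomial (Fin n) L),
        P ≠ 0 ∧ Polynomial.eval₂ (polyToBigPS L n) (a i) P = 0) ∧
    (∃ P : Polynomial (MvPolynomial (Fin (n + 1)) L), P ≠ 0 ∧ Polynomial.aeval U P = 0) :=
  weierstrass_data_algebraic_general L n F hreg m U a ha ha0 hFUG
end

section
/- Let L be an algebraically closed field and K an algebraically closed field extension of L. Let d ≥ 1 and let (u_α) be a family of elements of K, indexed by the monomials α of degree d in X, Y, Z, which is algebraically independent over L, and set s = ∑_α u_α·α ∈ K[X,Y,Z]. Then the projective plane curve s = 0 is nonsingular: for every nonzero point p ∈ K³ with s(p) = 0, the gradient vector (∂s/∂X(p), ∂s/∂Y(p), ∂s/∂Z(p)) is nonzero. -/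
/-!
Suppose `x ≠ 0` is a singular point of `f`; rescale it so that `x j = 1`. The equations
`f(x) = 0` and `∂ᵢf(x) = 0` for `i ≠ j` are linear in the coefficients of `X_j^d` and
`X_j^(d-1) X_i` respectively, with coefficient `1`, so these `n` coefficients are polynomials in
the remaining ones and the `n - 1` coordinates `x i`, `i ≠ j`. All coefficients then lie in an
algebra generated by fewer elements than there are coefficients, which bounds their transcendence
degree and contradicts algebraic independence. Using `f(x) = 0` rather than `∂ⱼf(x) = 0` for the
coefficient of `X_j^d` is what makes the argument work when the characteristic divides `d`.
-/

open MvPolynomial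

universe u v

open Cardinal in
theorem AlgebraicIndependent.lift_cardinalMk_le_of_forall_mem_adjoin {ι : Type u} {R : Type*}
    {A : Type v} [CommRing R] [Nontrivial R] [CommRing A] [NoZeroDivisors A] [Algebra R A]
    {x : ι → A} (hx : AlgebraicIndependent R x) {s : Set A}
    (hs : ∀ i, x i ∈ Algebra.adjoin R s) : lift.{v} #ι ≤ lift.{u} #s := by
  set S := Algebra.adjoin R s
  set t : Set S := (↑) ⁻¹' s
  have hxS : AlgebraicIndependent R fun i => (⟨x i, hs i⟩ : S) := .of_comp S.val hx
  have : Nontrivial S := hxS.algebraMap_injective.nontrivial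
  have : Algebra.IsAlgebraic (Algebra.adjoin R t) S := by
    refine ⟨fun a => ?_⟩
    have ha : a ∈ Algebra.adjoin R t := by
      rw [Algebra.adjoin_adjoin_coe_preimage]; exact Algebra.mem_top
    exact isAlgebraic_algebraMap (⟨a, ha⟩ : Algebra.adjoin R t)
  calc lift #ι ≤ lift (Algebra.trdeg R S) := hxS.lift_cardinalMk_le_trdeg
    _ ≤ lift #t := lift_le.mpr (Algebra.IsAlgebraic.trdeg_le_cardinalMk R t)
    _ ≤ lift #s := lift_le.mpr (mk_preimage_of_injective _ _ Subtype.val_injective)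

open Cardinal in
theorem AlgebraicIndependent.ncard_le_of_forall_mem_adjoin_image_compl {ι κ R A : Type*}
    [Finite ι] [Finite κ] [CommRing R] [Nontrivial R] [CommRing A] [NoZeroDivisors A]
    [Algebra R A] {x : ι → A} (hx : AlgebraicIndependent R x) (T : Set ι) (w : κ → A)
    (h : ∀ i, x i ∈ Algebra.adjoin R (x '' Tᶜ ∪ Set.range w)) : T.ncard ≤ Nat.card κ := by
  have hle := toNat_le_toNat (hx.lift_cardinalMk_le_of_forall_mem_adjoin h) <|
    lift_lt_aleph0.mpr (((Set.toFinite _).image x).union (Set.finite_range w)).lt_aleph0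
  rw [toNat_lift, toNat_lift] at hle
  change Nat.card ι ≤ (x '' Tᶜ ∪ Set.range w).ncard at hle
  refine Nat.le_of_add_le_add_right (b := Tᶜ.ncard) ?_
  calc T.ncard + Tᶜ.ncard = Nat.card ι := T.ncard_add_ncard_compl
    _ ≤ (x '' Tᶜ ∪ Set.range w).ncard := hle
    _ ≤ (x '' Tᶜ).ncard + (Set.range w).ncard := Set.ncard_union_le _ _
    _ ≤ Tᶜ.ncard + Nat.card κ :=
      add_le_add (Set.ncard_image_le (Set.toFinite _)) (Finite.card_range_le w)
    _ = Nat.card κ + Tᶜ.ncard := add_comm _ _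

namespace MvPolynomial

open Finsupp

theorem IsHomogeneous.eval_smul {σ R : Type*} [CommSemiring R] {φ : MvPolynomial σ R} {n : ℕ}
    (hφ : φ.IsHomogeneous n) (c : R) (x : σ → R) : eval (c • x) φ = c ^ n * eval x φ := by
  simp only [eval_eq, Finset.mul_sum, Pi.smul_apply, smul_eq_mul, mul_pow,
    Finset.prod_mul_distrib, Finset.prod_pow_eq_pow_sum]
  refine Finset.sum_congr rfl fun α hα => ?_
  have hdeg : α.degree = n := by
    rw [degree_eq_weight_one]; exact hφ (mem_support_iff.mp hα)
  rw [← degree_apply, hdeg]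
  ring

variable {σ R K : Type*} [CommRing R] [CommRing K] [Algebra R K] {A : Subalgebra R K}
  {x : σ → K}

theorem coeff_mem_of_eval_eq_zero {f : MvPolynomial σ K} {μ : σ →₀ ℕ} (hx : ∀ i, x i ∈ A)
    (hμ : (μ.prod fun i e => x i ^ e) = 1) (hf : ∀ α ≠ μ, f.coeff α ∈ A) (h : eval x f = 0) :
    f.coeff μ ∈ A := by
  classical
  set g := f - monomial μ (f.coeff μ)
  have hg : ∀ α ∈ g.support, g.coeff α ∈ A := by
    intro α _
    by_cases hα : α = μ
    · simp [g, hα, A.zero_mem]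
    · simpa [g, coeff_monomial, Ne.symm hα] using hf α hα
  have hfμ : f.coeff μ = -eval x g := by simp [g, eval_monomial, hμ, h]
  exact hfμ ▸ A.neg_mem (eval_mem hg hx)

/-- The coefficient of `X_j^(d-1) X_i` in `f` is the coefficient of `X_j^(d-1)` in `∂ᵢf`, and
no other coefficient of `∂ᵢf` involves the coefficients of the monomials `X_j^(d-1) X_k`. -/
theorem coeff_mem_of_eval_pderiv_eq_zero {f : MvPolynomial σ K} {j : σ} {d : ℕ} (hd : 1 ≤ d)
    (hx : ∀ i, x i ∈ A) (hxj : x j = 1) (h0 : eval x f = 0)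
    (hpd : ∀ i ≠ j, eval x (pderiv i f) = 0)
    (hA : ∀ β ∉ Set.range fun i => single j (d - 1) + single i 1, f.coeff β ∈ A) (β : σ →₀ ℕ) :
    f.coeff β ∈ A := by
  set μ : σ → σ →₀ ℕ := fun i => single j (d - 1) + single i 1
  have hxpow : ∀ n, ((single j n).prod fun i e => x i ^ e) = 1 := fun n => by
    simp [prod_single_index, hxj]
  have hμj : μ j = single j d := by
    simp only [μ]; rw [← single_add, Nat.sub_add_cancel hd]
  have hμ_ne : ∀ i ≠ j, f.coeff (μ i) ∈ A := by
    intro i hij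
    have key := coeff_mem_of_eval_eq_zero (f := pderiv i f) hx (hxpow (d - 1)) (fun α hα => ?_)
      (hpd i hij)
    · rwa [coeff_pderiv, single_eq_of_ne hij, Nat.cast_zero, zero_add, mul_one] at key
    rw [coeff_pderiv]
    refine A.mul_mem (hA _ ?_) (A.add_mem (A.natCast_mem _) A.one_mem)
    rintro ⟨k, hk⟩
    by_cases hki : k = i
    · exact hα (add_right_cancel (hki ▸ hk)).symm
    · have hki' := congrArg (· i) hk
      simp [μ, Ne.symm hij, Ne.symm hki] at hki'
  have hμ : ∀ i, f.coeff (μ i) ∈ A := by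
    intro i
    by_cases hij : i = j
    · subst hij
      rw [hμj]
      refine coeff_mem_of_eval_eq_zero hx (hxpow d) (fun α hα => ?_) h0
      by_cases hr : α ∈ Set.range μ
      · obtain ⟨k, rfl⟩ := hr
        exact hμ_ne k fun hk => hα (hk ▸ hμj)
      · exact hA α hr
    · exact hμ_ne i hij
  by_cases hβ : β ∈ Set.range μ
  · obtain ⟨i, rfl⟩ := hβ
    exact hμ i
  · exact hA β hβ

end MvPolynomial

open Finsupp

theorem not_algebraicIndependent_coeff_of_eval_pderiv_eq_zero {σ L K : Type*} [Finite σ]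
    [CommRing L] [Nontrivial L] [CommRing K] [NoZeroDivisors K] [Algebra L K]
    {f : MvPolynomial σ K} {d : ℕ} (hd : 1 ≤ d) (hf : f.IsHomogeneous d) {x : σ → K} {j : σ}
    (hxj : x j = 1) (h0 : eval x f = 0) (hpd : ∀ i ≠ j, eval x (pderiv i f) = 0) :
    ¬ AlgebraicIndependent L fun α : {α : σ →₀ ℕ // α.degree = d} => f.coeff α := by
  set u := fun α : {α : σ →₀ ℕ // α.degree = d} => f.coeff α
  intro hind
  have : Finite {α : σ →₀ ℕ // α.degree = d} := (finite_of_degree_eq d).to_subtype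
  set μ : σ → {α : σ →₀ ℕ // α.degree = d} := fun i =>
    ⟨single j (d - 1) + single i 1, by simp only [map_add, degree_single]; omega⟩
  have hμ_inj : Function.Injective μ := fun a b h =>
    single_left_injective one_ne_zero (add_left_cancel (congrArg Subtype.val h))
  set A := Algebra.adjoin L (u '' (Set.range μ)ᶜ ∪ Set.range fun k : {k // k ≠ j} => x k)
  have hx : ∀ k, x k ∈ A := by
    intro k
    by_cases hkj : k = j
    · rw [hkj, hxj]; exact A.one_mem
    · exact Algebra.subset_adjoin (Or.inr ⟨⟨k, hkj⟩, rfl⟩)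
  have hA : ∀ β ∉ Set.range fun i => single j (d - 1) + single i 1, f.coeff β ∈ A := by
    intro β hβ
    by_cases hβd : β.degree = d
    · refine Algebra.subset_adjoin (Or.inl ⟨⟨β, hβd⟩, ?_, rfl⟩)
      rintro ⟨i, hi⟩
      exact hβ ⟨i, congrArg Subtype.val hi⟩
    · rw [hf.coeff_eq_zero hβd]; exact A.zero_mem
  have hcard := hind.ncard_le_of_forall_mem_adjoin_image_compl (Set.range μ) _
    fun α => coeff_mem_of_eval_pderiv_eq_zero hd hx hxj h0 hpd hA α
  rw [Set.ncard_range_of_injective hμ_inj] at hcard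
  exact (Finite.card_subtype_lt (p := (· ≠ j)) (x := j) (by simp)).not_ge hcard

theorem exists_eval_pderiv_ne_zero_of_algebraicIndependent_coeff {σ L K : Type*} [Finite σ]
    [CommRing L] [Nontrivial L] [Field K] [Algebra L K]
    {f : MvPolynomial σ K} {d : ℕ} (hd : 1 ≤ d) (hf : f.IsHomogeneous d)
    (hind : AlgebraicIndependent L fun α : {α : σ →₀ ℕ // α.degree = d} => f.coeff α)
    {x : σ → K} (hx : x ≠ 0) (h0 : eval x f = 0) : ∃ i, eval x (pderiv i f) ≠ 0 := by
  by_contra! hpd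
  obtain ⟨j, hj⟩ : ∃ j, x j ≠ 0 := Function.ne_iff.mp hx
  refine not_algebraicIndependent_coeff_of_eval_pderiv_eq_zero hd hf (x := (x j)⁻¹ • x) (j := j)
    (inv_mul_cancel₀ hj) ?_ (fun i _ => ?_) hind
  · rw [hf.eval_smul, h0, mul_zero]
  · rw [hf.pderiv.eval_smul, hpd i, mul_zero]

theorem generic_curve_smooth_general (L K : Type) [Field L]
    [Field K] [Algebra L K] (d : ℕ) (hd : 1 ≤ d)
    (s : MvPolynomial (Fin 3) K) (hshom : s.IsHomogeneous d)
    (hgen : AlgebraicIndependent L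
      (fun α : {α : Fin 3 →₀ ℕ // α 0 + α 1 + α 2 = d} => s.coeff (α : Fin 3 →₀ ℕ))) :
    ∀ p : Fin 3 → K, p ≠ 0 → eval p s = 0 →
      (fun i : Fin 3 => eval p (pderiv i s)) ≠ 0 := by
  intro p hp h0 hgrad
  let e : {α : Fin 3 →₀ ℕ // α.degree = d} ≃ {α : Fin 3 →₀ ℕ // α 0 + α 1 + α 2 = d} :=
    Equiv.subtypeEquivRight fun α => by rw [degree_eq_sum, Fin.sum_univ_three]
  obtain ⟨i, hi⟩ := exists_eval_pderiv_ne_zero_of_algebraicIndependent_coeff hd hshom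
    (hgen.comp e e.injective) hp h0
  exact hi (congrFun hgrad i)

/-- The generic degree-`d` projective plane curve is smooth (in all characteristics):
if `s ∈ K[X,Y,Z]` is homogeneous of degree `d ≥ 1` and its coefficients, indexed by the
monomials of degree `d`, are algebraically independent over `L`, then at every nonzero
zero `p ∈ K³` of `s` the gradient of `s` is nonzero. -/
theorem generic_curve_smooth (L K : Type) [Field L] [IsAlgClosed L]
    [Field K] [IsAlgClosed K] [Algebra L K] (d : ℕ) (hd : 1 ≤ d)
    (s : MvPolynomial (Fin 3) K) (hshom : s.IsHomogeneous d)
    (hgen : AlgebraicIndependent L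
      (fun α : {α : Fin 3 →₀ ℕ // α 0 + α 1 + α 2 = d} => s.coeff (α : Fin 3 →₀ ℕ))) :
    ∀ p : Fin 3 → K, p ≠ 0 → eval p s = 0 →
      (fun i : Fin 3 => eval p (pderiv i s)) ≠ 0 :=
  generic_curve_smooth_general L K d hd s hshom hgen
end

section
/- Let L be an algebraically closed field, K a field extension of L, and d ≥ 1. Let (u_{ij})_{0 ≤ i+j ≤ d} be a family of elements of K that is algebraically independent over L. If (x₀, y₀) ∈ K² satisfies ∑_{0 ≤ i+j ≤ d} u_{ij}·x₀^i·y₀^j = 0, then at least one of x₀, y₀ is transcendental over L. -/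
/-!
Over an algebraically closed `L`, an element algebraic over `L` lies in `L`. So if both `x₀` and
`y₀` were algebraic, the equation `∑ u_{ij} x₀^i y₀^j = 0` would be an `L`-linear relation among
the `u_{ij}`, whose coefficient of `u_{00}` is `1`; this contradicts algebraic (indeed linear)
independence.
-/

open IntermediateField in
theorem IsAlgClosed.mem_range_algebraMap_of_isAlgebraic {k K : Type*} [Field k] [IsAlgClosed k]
    [Field K] [Algebra k K] {x : K} (hx : IsAlgebraic k x) : x ∈ Set.range (algebraMap k K) := by
  have : FiniteDimensional k k⟮x⟯ := adjoin.finiteDimensional hx.isIntegral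
  exact mem_bot.mp <| adjoin_simple_eq_bot_iff.mp <| eq_bot_of_isAlgClosed_of_isAlgebraic _

theorem Fintype.sum_ite_eq_sum_subtype {α M : Type*} [Fintype α] [AddCommMonoid M]
    (p : α → Prop) [DecidablePred p] (f : α → M) :
    ∑ a, (if p a then f a else 0) = ∑ a : {a // p a}, f a := by
  rw [← Finset.sum_filter]
  exact Finset.sum_subtype _ (by simp) f

theorem generic_curve_point_transcendental_general (L K : Type) [Field L] [IsAlgClosed L]
    [Field K] [Algebra L K] (d : ℕ)
    (u : Fin (d + 1) → Fin (d + 1) → K)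
    (hu : AlgebraicIndependent L
      (fun p : {q : Fin (d + 1) × Fin (d + 1) // (q.1 : ℕ) + (q.2 : ℕ) ≤ d} =>
        u p.1.1 p.1.2))
    (x₀ y₀ : K)
    (hzero : ∑ i : Fin (d + 1), ∑ j : Fin (d + 1),
      (if (i : ℕ) + (j : ℕ) ≤ d then u i j * x₀ ^ (i : ℕ) * y₀ ^ (j : ℕ) else 0) = 0) :
    Transcendental L x₀ ∨ Transcendental L y₀ := by
  by_contra! h
  obtain ⟨a, rfl⟩ := IsAlgClosed.mem_range_algebraMap_of_isAlgebraic (not_not.mp h.1)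
  obtain ⟨b, rfl⟩ := IsAlgClosed.mem_range_algebraMap_of_isAlgebraic (not_not.mp h.2)
  have hrel : ∑ q : {q : Fin (d + 1) × Fin (d + 1) // (q.1 : ℕ) + (q.2 : ℕ) ≤ d},
      (a ^ (q.1.1 : ℕ) * b ^ (q.1.2 : ℕ)) • u q.1.1 q.1.2 = 0 := by
    rw [← hzero, ← Fintype.sum_prod_type', Fintype.sum_ite_eq_sum_subtype]
    refine Finset.sum_congr rfl fun q _ => ?_
    rw [Algebra.smul_def, map_mul, map_pow, map_pow]
    ring
  have h00 := Fintype.linearIndependent_iff.mp hu.linearIndependent _ hrel ⟨(0, 0), by simp⟩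
  simp at h00

/-- Any point on the generic degree-`d` plane curve has transcendence degree ≥ 1 over `L`
(claim in Lemma 4.12): if the coefficients `u_{ij}` (for `i + j ≤ d`) are algebraically
independent over the algebraically closed field `L` and `∑_{i+j≤d} u_{ij} x₀^i y₀^j = 0`,
then `x₀` or `y₀` is transcendental over `L`. -/
theorem generic_curve_point_transcendental (L K : Type) [Field L] [IsAlgClosed L]
    [Field K] [Algebra L K] (d : ℕ) (hd : 1 ≤ d)
    (u : Fin (d + 1) → Fin (d + 1) → K)
    (hu : AlgebraicIndependent L
      (fun p : {q : Fin (d + 1) × Fin (d + 1) // (q.1 : ℕ) + (q.2 : ℕ) ≤ d} =>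
        u p.1.1 p.1.2))
    (x₀ y₀ : K)
    (hzero : ∑ i : Fin (d + 1), ∑ j : Fin (d + 1),
      (if (i : ℕ) + (j : ℕ) ≤ d then u i j * x₀ ^ (i : ℕ) * y₀ ^ (j : ℕ) else 0) = 0) :
    Transcendental L x₀ ∨ Transcendental L y₀ :=
  generic_curve_point_transcendental_general L K d u hu x₀ y₀ hzero
end

section
/- Let L be an algebraically closed field, let f, g ∈ L[x,y], and let p ∈ L² be a point with f(p) = 0 and g(p) = 0. Suppose the Jacobian determinant (∂f/∂x · ∂g/∂y − ∂f/∂y · ∂g/∂x)(p) is nonzero (the curves f = 0 and g = 0 are both smooth at p and meet transversally there). Then I(f,g,p) = 1. -/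
open MvPolynomial

/-- The maximal ideal of `L[x,y]` corresponding to the point `p = (p₁, p₂)`, i.e. the
kernel of evaluation at `p`, which is the ideal `(x - p₁, y - p₂)`. -/
noncomputable def ptIdeal (L : Type) [Field L] (p : L × L) : Ideal (MvPolynomial (Fin 2) L) :=
  RingHom.ker (aeval (R := L) ![p.1, p.2])

theorem ptIdeal_isMaximal (L : Type) [Field L] (p : L × L) : (ptIdeal L p).IsMaximal :=
  RingHom.ker_isMaximal_of_surjective _ (fun x => ⟨C x, by simp⟩)

/-- The intersection multiplicity `I(f, g, p)` of the plane curves `f = 0` and `g = 0`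
at the point `p`: the dimension over `L` of the localization of `L[x,y]/(f,g)` at the
maximal ideal `(x - p₁, y - p₂)`. -/
noncomputable def interMult (L : Type) [Field L] (f g : MvPolynomial (Fin 2) L)
    (p : L × L) : Cardinal :=
  haveI : (ptIdeal L p).IsPrime := (ptIdeal_isMaximal L p).isPrime
  letI : Algebra L (Localization.AtPrime (ptIdeal L p)) :=
    ((algebraMap (MvPolynomial (Fin 2) L) (Localization.AtPrime (ptIdeal L p))).comp
      (algebraMap L (MvPolynomial (Fin 2) L))).toAlgebra
  Module.rank L
    (Localization.AtPrime (ptIdeal L p) ⧸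
      (Ideal.span {algebraMap (MvPolynomial (Fin 2) L) (Localization.AtPrime (ptIdeal L p)) f,
        algebraMap (MvPolynomial (Fin 2) L) (Localization.AtPrime (ptIdeal L p)) g}))

/-!
Write `f = a (x - p₁) + b (y - p₂)` and `g = c (x - p₁) + d (y - p₂)`; then `a, b, c, d`
evaluate at `p` to the partial derivatives of `f, g`, so `a d - b c` does not vanish at `p`
and becomes a unit in the local ring `L[x,y]_p`. Inverting this matrix shows that `(f, g)`
generates the maximal ideal `(x - p₁, y - p₂)` there, and the quotient is the residue field
at the `L`-point `p`, which is `L` itself.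
-/

namespace MvPolynomial

variable {σ R : Type*} [CommRing R]

theorem sub_C_eval_mem_span_X_sub_C (x : σ → R) (q : MvPolynomial σ R) :
    q - C (eval x q) ∈ Ideal.span (Set.range fun i => X i - C (x i)) := by
  induction q using MvPolynomial.induction_on with
  | C a => simp
  | add q r hq hr =>
    convert Ideal.add_mem _ hq hr using 1
    simp only [map_add]
    ring
  | mul_X q i hq =>
    have hXi : X i - C (x i) ∈ Ideal.span (Set.range fun i => X i - C (x i)) :=
      Ideal.subset_span ⟨i, rfl⟩
    convert Ideal.add_mem _ (Ideal.mul_mem_left _ q hXi) (Ideal.mul_mem_left _ (C (x i)) hq)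
      using 1
    simp only [map_mul, eval_X]
    ring

theorem ker_eval_eq_span_X_sub_C (x : σ → R) :
    RingHom.ker (eval x) = Ideal.span (Set.range fun i => X i - C (x i)) := by
  refine le_antisymm (fun q hq => ?_) (Ideal.span_le.mpr ?_)
  · simpa [RingHom.mem_ker.mp hq] using sub_C_eval_mem_span_X_sub_C x q
  · rintro _ ⟨i, rfl⟩
    simp

theorem exists_eq_sum_mul_X_sub_C [Fintype σ] {x : σ → R} {q : MvPolynomial σ R}
    (hq : eval x q = 0) : ∃ a : σ → MvPolynomial σ R, q = ∑ i, a i * (X i - C (x i)) := by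
  rw [← RingHom.mem_ker, ker_eval_eq_span_X_sub_C] at hq
  obtain ⟨a, ha⟩ := (Submodule.mem_span_range_iff_exists_fun _).mp hq
  exact ⟨a, ha.symm⟩

theorem eval_pderiv_sum_mul_X_sub_C [Fintype σ] (x : σ → R) (a : σ → MvPolynomial σ R)
    (j : σ) : eval x (pderiv j (∑ i, a i * (X i - C (x i)))) = eval x (a j) := by
  classical
  simp [pderiv_X, Pi.single_apply, apply_ite (eval x)]

end MvPolynomial

theorem Ideal.span_pair_eq_of_isUnit_det {A : Type*} [CommRing A] {a b c d u v : A}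
    (h : IsUnit (a * d - b * c)) :
    Ideal.span {a * u + b * v, c * u + d * v} = Ideal.span {u, v} := by
  refine le_antisymm (Ideal.span_le.mpr ?_) (Ideal.span_le.mpr ?_)
  · rintro _ (rfl | rfl) <;>
      exact Ideal.add_mem _ (Ideal.mul_mem_left _ _ (Ideal.subset_span (by simp)))
        (Ideal.mul_mem_left _ _ (Ideal.subset_span (by simp)))
  · have hf : a * u + b * v ∈ Ideal.span {a * u + b * v, c * u + d * v} :=
      Ideal.subset_span (by simp)
    have hg : c * u + d * v ∈ Ideal.span {a * u + b * v, c * u + d * v} :=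
      Ideal.subset_span (by simp)
    rintro _ (rfl | rfl) <;> rw [SetLike.mem_coe, ← Ideal.unit_mul_mem_iff_mem _ h]
    · convert Ideal.sub_mem _ (Ideal.mul_mem_left _ d hf) (Ideal.mul_mem_left _ b hg) using 1
      ring
    · convert Ideal.sub_mem _ (Ideal.mul_mem_left _ a hg) (Ideal.mul_mem_left _ c hf) using 1
      ring

theorem Ideal.rank_quotient_eq_one_of_forall_exists_sub_mem {K A : Type*} [Field K] [CommRing A]
    [Algebra K A] {I : Ideal A} (hI : I ≠ ⊤) (h : ∀ z, ∃ c, z - algebraMap K A c ∈ I) :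
    Module.rank K (A ⧸ I) = 1 := by
  have := Ideal.Quotient.nontrivial_iff.mpr hI
  have hsurj : Function.Surjective (algebraMap K (A ⧸ I)) := by
    intro z
    obtain ⟨z, rfl⟩ := Ideal.Quotient.mk_surjective z
    obtain ⟨c, hc⟩ := h z
    exact ⟨c, (Ideal.Quotient.eq.mpr hc).symm⟩
  simpa using (LinearEquiv.ofBijective (Algebra.linearMap K (A ⧸ I))
    ⟨(algebraMap K _).injective, hsurj⟩).lift_rank_eq.symm

section LocalizationAtPrime

open IsLocalRing

variable {R : Type*} [CommRing R] {P : Ideal R}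

theorem Localization.AtPrime.span_pair_eq_maximalIdeal [P.IsPrime] {a b c d u v : R}
    (hP : P = Ideal.span {u, v}) (hdet : a * d - b * c ∉ P) :
    Ideal.span {algebraMap R (Localization.AtPrime P) (a * u + b * v),
      algebraMap R (Localization.AtPrime P) (c * u + d * v)} =
      maximalIdeal (Localization.AtPrime P) := by
  have hunit := (IsLocalization.AtPrime.isUnit_to_map_iff (Localization.AtPrime P) P _).mpr hdet
  simp only [map_add, map_mul, map_sub] at hunit ⊢
  rw [Ideal.span_pair_eq_of_isUnit_det hunit, ← Localization.AtPrime.map_eq_maximalIdeal,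
    congrArg (Ideal.map (algebraMap R (Localization.AtPrime P))) hP, Ideal.map_span,
    Set.image_pair]

theorem Localization.AtPrime.exists_sub_algebraMap_mem_maximalIdeal {k : Type*} [CommRing k]
    [P.IsMaximal] (c : k →+* R) (hc : ∀ r, ∃ a, r - c a ∈ P) (z : Localization.AtPrime P) :
    ∃ a, z - algebraMap R _ (c a) ∈ maximalIdeal (Localization.AtPrime P) := by
  obtain ⟨r, hr⟩ := P.algebraMap_residueField_surjective (residue (Localization.AtPrime P) z)
  obtain ⟨a, ha⟩ := hc r
  have hzr : z - algebraMap R _ r ∈ maximalIdeal (Localization.AtPrime P) := by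
    rw [← residue_eq_zero_iff, map_sub, ← hr]
    exact sub_eq_zero.mpr (IsScalarTower.algebraMap_apply R (Localization.AtPrime P) _ r)
  have hra : algebraMap R _ (r - c a) ∈ maximalIdeal (Localization.AtPrime P) := by
    rw [← Localization.AtPrime.map_eq_maximalIdeal]
    exact Ideal.mem_map_of_mem _ ha
  exact ⟨a, by simpa using Ideal.add_mem _ hzr hra⟩

end LocalizationAtPrime

instance (L : Type) [Field L] (p : L × L) : (ptIdeal L p).IsMaximal := ptIdeal_isMaximal L p

theorem mem_ptIdeal_iff {L : Type} [Field L] {p : L × L} {q : MvPolynomial (Fin 2) L} :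
    q ∈ ptIdeal L p ↔ eval ![p.1, p.2] q = 0 := by
  simp [ptIdeal, RingHom.mem_ker]

theorem ptIdeal_eq_span (L : Type) [Field L] (p : L × L) :
    ptIdeal L p = Ideal.span {X 0 - C p.1, X 1 - C p.2} := by
  ext q
  rw [mem_ptIdeal_iff, ← RingHom.mem_ker, ker_eval_eq_span_X_sub_C]
  congr!
  ext
  simp [Fin.exists_fin_two, eq_comm]

theorem exists_first_order_expansion {L : Type} [Field L] {p : L × L}
    {q : MvPolynomial (Fin 2) L} (hq : eval ![p.1, p.2] q = 0) :
    ∃ a b, q = a * (X 0 - C p.1) + b * (X 1 - C p.2) ∧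
      eval ![p.1, p.2] (pderiv 0 q) = eval ![p.1, p.2] a ∧
      eval ![p.1, p.2] (pderiv 1 q) = eval ![p.1, p.2] b := by
  obtain ⟨c, rfl⟩ := exists_eq_sum_mul_X_sub_C (σ := Fin 2) hq
  exact ⟨c 0, c 1, by simp [Fin.sum_univ_two], eval_pderiv_sum_mul_X_sub_C _ _ _,
    eval_pderiv_sum_mul_X_sub_C _ _ _⟩

theorem interMult_eq_one_of_transverse_general (L : Type) [Field L]
    (f g : MvPolynomial (Fin 2) L) (p : L × L)
    (hf : eval ![p.1, p.2] f = 0) (hg : eval ![p.1, p.2] g = 0)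
    (hjac : eval ![p.1, p.2] (pderiv 0 f) * eval ![p.1, p.2] (pderiv 1 g) -
      eval ![p.1, p.2] (pderiv 1 f) * eval ![p.1, p.2] (pderiv 0 g) ≠ 0) :
    interMult L f g p = 1 := by
  obtain ⟨a, b, rfl, hfa, hfb⟩ := exists_first_order_expansion hf
  obtain ⟨c, d, rfl, hgc, hgd⟩ := exists_first_order_expansion hg
  have hdet : a * d - b * c ∉ ptIdeal L p := by
    rwa [mem_ptIdeal_iff, map_sub, map_mul, map_mul, ← hfa, ← hfb, ← hgc, ← hgd]
  unfold interMult
  rw [Localization.AtPrime.span_pair_eq_maximalIdeal (ptIdeal_eq_span L p) hdet]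
  refine Ideal.rank_quotient_eq_one_of_forall_exists_sub_mem
    (IsLocalRing.maximalIdeal.isMaximal _).ne_top
    (Localization.AtPrime.exists_sub_algebraMap_mem_maximalIdeal (algebraMap L _) fun r =>
      ⟨eval ![p.1, p.2] r, ?_⟩)
  simp [mem_ptIdeal_iff]

/-- Lemma 4.17 (algebraic content): if the curves `f = 0` and `g = 0` pass through `p`
and the Jacobian determinant `(∂f/∂x·∂g/∂y − ∂f/∂y·∂g/∂x)(p)` is nonzero (both curves are
smooth at `p` and meet transversally there), then the intersection multiplicity at `p`
is `1`. -/
theorem interMult_eq_one_of_transverse (L : Type) [Field L] [IsAlgClosed L]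
    (f g : MvPolynomial (Fin 2) L) (p : L × L)
    (hf : eval ![p.1, p.2] f = 0) (hg : eval ![p.1, p.2] g = 0)
    (hjac : eval ![p.1, p.2] (pderiv 0 f) * eval ![p.1, p.2] (pderiv 1 g) -
      eval ![p.1, p.2] (pderiv 1 f) * eval ![p.1, p.2] (pderiv 0 g) ≠ 0) :
    interMult L f g p = 1 :=
  interMult_eq_one_of_transverse_general L f g p hf hg hjac
end

section
/- Let L be a field and let G ∈ L[[X,Y]] be a formal power series with G(0,0) = 0 (zero constant coefficient) and ∂G/∂Y(0,0) ≠ 0 (the coefficient of the monomial Y in G is nonzero). Then there exists a power series η ∈ L[[X]] with zero constant coefficient such that substituting Y = η(X) into G gives the zero power series: G(X, η(X)) = 0. -/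
/-- Substitution of `Y = η(X)` into a two-variable formal power series `G(X,Y)`:
the `n`-th coefficient of `G(X, η(X))` is `∑_{i,j ≤ n} G_{ij}·(coeff of X^n in X^i·η^j)`.
When `η` has zero constant coefficient only the terms with `i + j ≤ n` contribute, so
this is the usual composition of formal power series. -/
noncomputable def substY (L : Type) [Field L] (η : PowerSeries L)
    (G : MvPowerSeries (Fin 2) L) : PowerSeries L :=
  PowerSeries.mk fun n => ∑ i ∈ Finset.range (n + 1), ∑ j ∈ Finset.range (n + 1),
    MvPowerSeries.coeff (Finsupp.single (0 : Fin 2) i + Finsupp.single (1 : Fin 2) j) G *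
      PowerSeries.coeff n (PowerSeries.X ^ i * η ^ j)

/-!
The coefficients of `η` are found one at a time. If `f` and `g` have zero constant term and
agree below degree `n`, then in degree `n` the series `G(X, f)` and `G(X, g)` differ only
through the linear term `G_{01} Y`, by `G_{01} (f_n - g_n)`: every other monomial `X^i Y^j`
contributes a multiple of `X^{n+1}`. So once `η_0, …, η_{n-1}` are fixed, the degree-`n`
coefficient of `G(X, η)` is that of `G(X, trunc n η)` plus `G_{01} η_n`, and since `G_{01}` is
invertible the choice of `η_n` kills it.
-/

open PowerSeries

theorem pow_succ_dvd_pow_sub_pow {R : Type*} [CommRing R] {x a b : R} {n m : ℕ}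
    (ha : x ∣ a) (hb : x ∣ b) (hab : x ^ n ∣ a - b) (hm : 2 ≤ m) :
    x ^ (n + 1) ∣ a ^ m - b ^ m := by
  rw [← geom_sum₂_mul, pow_succ']
  refine mul_dvd_mul (Finset.dvd_sum fun i _ => ?_) hab
  rcases Nat.eq_zero_or_pos i with rfl | hi
  · exact dvd_mul_of_dvd_right (dvd_pow hb (by omega)) _
  · exact dvd_mul_of_dvd_left (dvd_pow ha hi.ne') _

theorem pow_succ_dvd_pow_mul_pow_sub_pow {R : Type*} [CommRing R] {x a b : R} {n i j : ℕ}
    (ha : x ∣ a) (hb : x ∣ b) (hab : x ^ n ∣ a - b) (hij : ¬(i = 0 ∧ j = 1)) :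
    x ^ (n + 1) ∣ x ^ i * (a ^ j - b ^ j) := by
  match j with
  | 0 => simp
  | 1 =>
    rw [pow_one, pow_one, pow_succ']
    exact mul_dvd_mul (dvd_pow_self x (by omega)) hab
  | j + 2 => exact dvd_mul_of_dvd_right (pow_succ_dvd_pow_sub_pow ha hb hab (by omega)) _

theorem PowerSeries.X_pow_dvd_sub_trunc {R : Type*} [Ring R] (n : ℕ) (f : R⟦X⟧) :
    X ^ n ∣ f - (trunc n f : R⟦X⟧) :=
  ⟨_, sub_eq_iff_eq_add.mpr (eq_X_pow_mul_shift_add_trunc n f)⟩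

theorem PowerSeries.X_dvd_trunc {R : Type*} [Semiring R] {f : R⟦X⟧} (hf : X ∣ f) (n : ℕ) :
    X ∣ (trunc n f : R⟦X⟧) := by
  rw [X_dvd_iff] at hf ⊢
  rw [← coeff_zero_eq_constantCoeff_apply, Polynomial.coeff_coe, coeff_trunc]
  split_ifs <;> simp [hf]

section substY

variable {L : Type} [Field L]

theorem coeff_zero_substY (η : L⟦X⟧) (G : MvPowerSeries (Fin 2) L) :
    coeff 0 (substY L η G) = MvPowerSeries.constantCoeff G := by
  simp [substY]

theorem coeff_substY_sub_coeff_substY {f g : L⟦X⟧} {n : ℕ} (hf : X ∣ f) (hg : X ∣ g)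
    (hfg : X ^ n ∣ f - g) (G : MvPowerSeries (Fin 2) L) :
    coeff n (substY L f G) - coeff n (substY L g G) =
      MvPowerSeries.coeff (Finsupp.single 1 1) G * coeff n (f - g) := by
  have hvanish : ∀ i j, ¬(i = 0 ∧ j = 1) → coeff n (X ^ i * (f ^ j - g ^ j)) = 0 := fun i j hij =>
    X_pow_dvd_iff.mp (pow_succ_dvd_pow_mul_pow_sub_pow hf hg hfg hij) n n.lt_succ_self
  simp only [substY, coeff_mk, ← Finset.sum_sub_distrib, ← mul_sub, ← map_sub]
  rw [Finset.sum_eq_single 0, Finset.sum_eq_single 1]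
  · simp
  · exact fun j _ hj => by rw [hvanish 0 j (by omega), mul_zero]
  · intro h1
    have hn : n = 0 := by simpa using h1
    subst hn
    rw [X_dvd_iff] at hf hg
    simp [coeff_zero_eq_constantCoeff_apply, hf, hg]
  · exact fun i _ hi => Finset.sum_eq_zero fun j _ => by rw [hvanish i j (by omega), mul_zero]
  · simp

noncomputable def implicitCoeff (G : MvPowerSeries (Fin 2) L) : ℕ → L
  | n => -(MvPowerSeries.coeff (Finsupp.single 1 1) G)⁻¹ *
      coeff n (substY L (mk fun k => if k < n then implicitCoeff G k else 0) G)

noncomputable def implicitSeries (G : MvPowerSeries (Fin 2) L) : L⟦X⟧ :=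
  mk (implicitCoeff G)

theorem coeff_implicitSeries (G : MvPowerSeries (Fin 2) L) (n : ℕ) :
    coeff n (implicitSeries G) = -(MvPowerSeries.coeff (Finsupp.single 1 1) G)⁻¹ *
      coeff n (substY L (trunc n (implicitSeries G)) G) := by
  rw [implicitSeries, coeff_mk, implicitCoeff]
  congr
  ext k
  simp [coeff_trunc]

variable {G : MvPowerSeries (Fin 2) L}

theorem constantCoeff_implicitSeries (hG0 : MvPowerSeries.constantCoeff G = 0) :
    constantCoeff (implicitSeries G) = 0 := by
  rw [← coeff_zero_eq_constantCoeff_apply, coeff_implicitSeries, coeff_zero_substY, hG0, mul_zero]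

theorem substY_implicitSeries (hG0 : MvPowerSeries.constantCoeff G = 0)
    (hGY : MvPowerSeries.coeff (Finsupp.single 1 1) G ≠ 0) :
    substY L (implicitSeries G) G = 0 := by
  ext n
  have hη : X ∣ implicitSeries G := X_dvd_iff.mpr (constantCoeff_implicitSeries hG0)
  have hstep := coeff_substY_sub_coeff_substY hη (X_dvd_trunc hη n)
    (X_pow_dvd_sub_trunc n (implicitSeries G)) G
  rw [map_sub, Polynomial.coeff_coe, coeff_trunc, if_neg n.lt_irrefl, sub_zero,
    coeff_implicitSeries] at hstep
  rw [map_zero]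
  linear_combination hstep -
    coeff n (substY L (trunc n (implicitSeries G)) G) * mul_inv_cancel₀ hGY

end substY

/-- Implicit function theorem for formal power series (used in Lemma 4.17): if
`G ∈ L[[X,Y]]` has `G(0,0) = 0` and `∂G/∂Y(0,0) ≠ 0` (the coefficient of `Y` in `G` is
nonzero), then there is a power series `η ∈ L[[X]]` with zero constant term such that
`G(X, η(X)) = 0`. -/
theorem implicit_function_theorem_powerSeries (L : Type) [Field L]
    (G : MvPowerSeries (Fin 2) L)
    (hG0 : MvPowerSeries.constantCoeff G = 0)
    (hGY : MvPowerSeries.coeff (Finsupp.single (1 : Fin 2) 1) G ≠ 0) :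
    ∃ η : PowerSeries L, PowerSeries.constantCoeff η = 0 ∧ substY L η G = 0 :=
  ⟨implicitSeries G, constantCoeff_implicitSeries hG0, substY_implicitSeries hG0 hGY⟩
end

section
/- Let L be an algebraically closed field, let f₁, f₂, g ∈ L[x,y], and let p ∈ L² be a common zero of f₁·f₂ and g. Suppose the intersection multiplicity I(f₁·f₂, g, p) is finite. Then I(f₁·f₂, g, p) = I(f₁, g, p) + I(f₂, g, p). -/
open MvPolynomial

/-! In the local ring `𝒪` of `L[x,y]` at `p`, which is a UFD, multiplication by `f₂` gives a short
exact sequence of `L`-vector spaces `0 → 𝒪/(f₁, g) → 𝒪/(f₁f₂, g) → 𝒪/(f₂, g) → 0` as soon as `f₂`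
is a nonzerodivisor modulo `g`. Finiteness of `I(f₁f₂, g, p)` makes `f₁f₂` and `g` coprime in `𝒪`:
for a common prime factor `q`, the domain `𝒪/(q)` would be finite-dimensional, hence a field, so
the maximal ideal `(x - p₁, y - p₂)` of `𝒪` would be the principal ideal `(q)`, making the primes
`x - p₁` and `y - p₂` associated. -/

universe u

theorem Function.Exact.rank_eq_add {K : Type*} {M₁ M₂ M₃ : Type u} [Ring K]
    [HasRankNullity.{u} K] [AddCommGroup M₁] [AddCommGroup M₂] [AddCommGroup M₃]
    [Module K M₁] [Module K M₂] [Module K M₃] {f : M₁ →ₗ[K] M₂} {g : M₂ →ₗ[K] M₃}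
    (hfg : Function.Exact f g) (hf : Function.Injective f) (hg : Function.Surjective g) :
    Module.rank K M₂ = Module.rank K M₁ + Module.rank K M₃ := by
  rw [← g.rank_range_add_rank_ker, LinearMap.range_eq_top.mpr hg, rank_top,
    hfg.linearMap_ker_eq, (LinearEquiv.ofInjective f hf).rank_eq, add_comm]

theorem Ideal.rank_quotient_le_of_le {L R : Type*} [CommRing L] [CommRing R] [Algebra L R]
    {I J : Ideal R} (h : I ≤ J) : Module.rank L (R ⧸ J) ≤ Module.rank L (R ⧸ I) :=
  LinearMap.rank_le_of_surjective (Ideal.Quotient.factorₐ L h).toLinearMap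
    (Ideal.Quotient.factor_surjective h)

theorem rank_quotient_span_mul_pair {L R : Type*} [Field L] [CommRing R] [Algebra L R]
    {a b c : R} (hbc : ∀ w, c ∣ b * w → c ∣ w) :
    Module.rank L (R ⧸ Ideal.span {a * b, c}) =
      Module.rank L (R ⧸ Ideal.span {a, c}) + Module.rank L (R ⧸ Ideal.span {b, c}) := by
  have hle : Ideal.span {a * b, c} ≤ Ideal.span {b, c} := by
    simp only [Ideal.span_le, Set.insert_subset_iff, Set.singleton_subset_iff, SetLike.mem_coe,
      Ideal.mem_span_pair]
    exact ⟨⟨a, 0, by ring⟩, ⟨0, 1, by ring⟩⟩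
  have hmul :
      Ideal.span {a, c} ≤ Submodule.comap (LinearMap.mulLeft R b) (Ideal.span {a * b, c}) := by
    simp only [Ideal.span_le, Set.insert_subset_iff, Set.singleton_subset_iff, SetLike.mem_coe,
      Submodule.mem_comap, LinearMap.mulLeft_apply, Ideal.mem_span_pair]
    exact ⟨⟨1, 0, by ring⟩, ⟨0, b, by ring⟩⟩
  refine Function.Exact.rank_eq_add
    (f := (Submodule.mapQ _ _ (LinearMap.mulLeft R b) hmul).restrictScalars L)
    (g := (Ideal.Quotient.factorₐ L hle).toLinearMap) ?exact ?injective
    (Ideal.Quotient.factor_surjective hle)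
  case exact =>
    intro y
    obtain ⟨z, rfl⟩ := Ideal.Quotient.mk_surjective y
    change Ideal.Quotient.mk _ z = 0 ↔ _
    rw [Ideal.Quotient.eq_zero_iff_mem, Ideal.mem_span_pair]
    constructor
    · rintro ⟨r, s, rfl⟩
      refine ⟨Ideal.Quotient.mk _ r, Ideal.Quotient.eq.mpr (Ideal.mem_span_pair.mpr ⟨0, -s, ?_⟩)⟩
      simp only [LinearMap.mulLeft_apply]
      ring
    · rintro ⟨x, hx⟩
      obtain ⟨r, rfl⟩ := Ideal.Quotient.mk_surjective x
      change Ideal.Quotient.mk _ (b * r) = Ideal.Quotient.mk _ z at hx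
      obtain ⟨t, s, hts⟩ := Ideal.mem_span_pair.mp (Ideal.Quotient.eq.mp hx)
      exact ⟨r - t * a, -s, by linear_combination -hts⟩
  case injective =>
    rw [injective_iff_map_eq_zero]
    intro x hx
    obtain ⟨z, rfl⟩ := Ideal.Quotient.mk_surjective x
    change Ideal.Quotient.mk _ (b * z) = 0 at hx
    rw [Ideal.Quotient.eq_zero_iff_mem, Ideal.mem_span_pair] at hx ⊢
    obtain ⟨r, s, hrs⟩ := hx
    obtain ⟨t, ht⟩ := hbc (z - r * a) ⟨s, by linear_combination -hrs⟩
    exact ⟨r, t, by linear_combination -ht⟩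

theorem MvPolynomial.prime_X_sub_C {σ R : Type*} [CommRing R] [IsDomain R] (i : σ) (c : R) :
    Prime (X i - C c : MvPolynomial σ R) := by
  classical
  let e := (renameEquiv R (Equiv.optionSubtypeNe i).symm).trans (optionEquivLeft R _)
  have he : e (X i - C c) = Polynomial.X - Polynomial.C (C c) := by simp [e]
  rw [← MulEquiv.prime_iff e, he]
  exact Polynomial.prime_X_sub_C _

namespace ptIdeal

variable {L : Type} [Field L] (p : L × L)

instance : (ptIdeal L p).IsPrime := (ptIdeal_isMaximal L p).isPrime

local notation "𝒪" => Localization.AtPrime (ptIdeal L p)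

theorem X_sub_C_mem (i : Fin 2) : X i - C (![p.1, p.2] i) ∈ ptIdeal L p := by
  fin_cases i <;> simp [ptIdeal]

theorem prime_algebraMap_X_sub_C (i : Fin 2) :
    Prime (algebraMap (MvPolynomial (Fin 2) L) 𝒪 (X i - C (![p.1, p.2] i))) := by
  have hmax := (IsLocalization.AtPrime.to_map_mem_maximal_iff 𝒪 _ _).mpr (X_sub_C_mem p i)
  refine (IsLocalization.toLocalizationMap (ptIdeal L p).primeCompl 𝒪).map_prime
    (prime_X_sub_C _ _) (fun h0 => ?_) ((IsLocalRing.mem_maximalIdeal _).mp hmax)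
  rw [IsLocalization.toLocalizationMap_apply,
    IsLocalization.to_map_eq_zero_iff 𝒪 (ptIdeal L p).primeCompl_le_nonZeroDivisors] at h0
  exact (prime_X_sub_C _ _).ne_zero h0

theorem not_algebraMap_X_sub_C_dvd :
    ¬ algebraMap (MvPolynomial (Fin 2) L) 𝒪 (X 0 - C p.1) ∣
      algebraMap (MvPolynomial (Fin 2) L) 𝒪 (X 1 - C p.2) := by
  rw [← IsLocalization.toLocalizationMap_apply (ptIdeal L p).primeCompl,
    ← IsLocalization.toLocalizationMap_apply (ptIdeal L p).primeCompl,
    Submonoid.LocalizationMap.map_dvd_map]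
  rintro ⟨s, hs, hdvd⟩
  rcases (prime_X_sub_C 0 p.1).dvd_or_dvd hdvd with h | h
  · exact hs (Ideal.mem_of_dvd _ h (X_sub_C_mem p 0))
  · simpa using map_dvd (eval ![p.1, p.2 + 1]) h

theorem not_rank_quotient_lt_aleph0_of_prime {q : 𝒪} (hq : Prime q) :
    ¬ Module.rank L (𝒪 ⧸ Ideal.span {q}) < Cardinal.aleph0 := by
  intro hfin
  have : (Ideal.span {q}).IsPrime := (Ideal.span_singleton_prime hq.ne_zero).mpr hq
  have : IsDomain (𝒪 ⧸ Ideal.span {q}) := Ideal.Quotient.isDomain _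
  have : Module.Finite L (𝒪 ⧸ Ideal.span {q}) := Module.rank_lt_aleph0_iff.mp hfin
  have := IsArtinianRing.of_finite L (𝒪 ⧸ Ideal.span {q})
  have hq_max : Ideal.span {q} = IsLocalRing.maximalIdeal 𝒪 :=
    IsLocalRing.eq_maximalIdeal (Ideal.Quotient.maximal_of_isField _
      (IsArtinianRing.isField_of_isDomain (𝒪 ⧸ Ideal.span {q})))
  have hdvd (i : Fin 2) :
      q ∣ algebraMap (MvPolynomial (Fin 2) L) 𝒪 (X i - C (![p.1, p.2] i)) := by
    rw [← Ideal.mem_span_singleton, hq_max]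
    exact (IsLocalization.AtPrime.to_map_mem_maximal_iff 𝒪 _ _).mpr (X_sub_C_mem p i)
  exact not_algebraMap_X_sub_C_dvd p
    ((hq.associated_of_dvd (prime_algebraMap_X_sub_C p 0) (hdvd 0)).symm.dvd.trans (hdvd 1))

theorem not_rank_quotient_lt_aleph0 {d : 𝒪} (hd : ¬ IsUnit d) :
    ¬ Module.rank L (𝒪 ⧸ Ideal.span {d}) < Cardinal.aleph0 := by
  obtain ⟨q, hq, hqd⟩ : ∃ q : 𝒪, Prime q ∧ q ∣ d := by
    rcases eq_or_ne d 0 with rfl | hd0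
    · exact ⟨_, prime_algebraMap_X_sub_C p 0, dvd_zero _⟩
    · obtain ⟨q, hq, hqd⟩ := WfDvdMonoid.exists_irreducible_factor hd hd0
      exact ⟨q, hq.prime, hqd⟩
  exact fun hfin => not_rank_quotient_lt_aleph0_of_prime p hq
    ((Ideal.rank_quotient_le_of_le (Ideal.span_singleton_le_span_singleton.mpr hqd)).trans_lt hfin)

end ptIdeal

theorem isRelPrime_of_interMult_lt_aleph0 {L : Type} [Field L] {p : L × L}
    {f g : MvPolynomial (Fin 2) L} (hfin : interMult L f g p < Cardinal.aleph0) :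
    IsRelPrime (algebraMap _ (Localization.AtPrime (ptIdeal L p)) f)
      (algebraMap _ (Localization.AtPrime (ptIdeal L p)) g) := by
  intro d hdf hdg
  by_contra hd
  refine ptIdeal.not_rank_quotient_lt_aleph0 p hd ((Ideal.rank_quotient_le_of_le ?_).trans_lt hfin)
  rw [Ideal.span_le, Set.insert_subset_iff, Set.singleton_subset_iff]
  exact ⟨Ideal.mem_span_singleton.mpr hdf, Ideal.mem_span_singleton.mpr hdg⟩

theorem interMult_mul_left_general (L : Type) [Field L]
    (f₁ f₂ g : MvPolynomial (Fin 2) L) (p : L × L)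
    (hfin : interMult L (f₁ * f₂) g p < Cardinal.aleph0) :
    interMult L (f₁ * f₂) g p = interMult L f₁ g p + interMult L f₂ g p := by
  have hcop : IsRelPrime (algebraMap _ (Localization.AtPrime (ptIdeal L p)) g)
      (algebraMap _ (Localization.AtPrime (ptIdeal L p)) f₂) :=
    ((isRelPrime_of_interMult_lt_aleph0 hfin).of_dvd_left (map_dvd _ (dvd_mul_left f₂ f₁))).symm
  show Module.rank L (_ ⧸ Ideal.span {algebraMap _ _ (f₁ * f₂), _}) = _
  rw [map_mul]
  exact rank_quotient_span_mul_pair fun w => hcop.dvd_of_dvd_mul_left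

/-- Additivity of intersection multiplicity over products (used in Lemma 4.16): if `p` is
a common zero of `f₁·f₂` and `g` and `I(f₁·f₂, g, p)` is finite, then
`I(f₁·f₂, g, p) = I(f₁, g, p) + I(f₂, g, p)`. -/
theorem interMult_mul_left (L : Type) [Field L] [IsAlgClosed L]
    (f₁ f₂ g : MvPolynomial (Fin 2) L) (p : L × L)
    (hf : eval ![p.1, p.2] (f₁ * f₂) = 0) (hg : eval ![p.1, p.2] g = 0)
    (hfin : interMult L (f₁ * f₂) g p < Cardinal.aleph0) :
    interMult L (f₁ * f₂) g p = interMult L f₁ g p + interMult L f₂ g p :=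
  interMult_mul_left_general L f₁ f₂ g p hfin
end
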